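/- For every s > 0 and every r > 1/2, the continued fraction s + K_{n=1}^∞ (((2n−1)²r² − (r−1)²)/(2s)) equals 4r·(Γ((s+2r+1)/(4r))·Γ((s+4r−1)/(4r)))/(Γ((s+1)/(4r))·Γ((s+2r−1)/(4r))), where Γ is the Gamma function. -/

import Mathlib

open Filter Real

/-- Numerators of the convergents of a generalized continued fraction with
integer part `b₀`, partial numerators `a n` and partial denominators `b n` (for `n ≥ 1`). -/
noncomputable def cfNum (b₀ : ℝ) (a b : ℕ → ℝ) : ℕ → ℝ
  | 0 => b₀
  | 1 => b 1 * b₀ + a 1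
  | n + 2 => b (n + 2) * cfNum b₀ a b (n + 1) + a (n + 2) * cfNum b₀ a b n

/-- Denominators of the convergents of a generalized continued fraction. -/
noncomputable def cfDen (a b : ℕ → ℝ) : ℕ → ℝ
  | 0 => 1
  | 1 => b 1
  | n + 2 => b (n + 2) * cfDen a b (n + 1) + a (n + 2) * cfDen a b n

/-- `IsCFLimit b₀ a b L` means: the convergents of the generalized continued fraction
`b₀ + a 1 / (b 1 + a 2 / (b 2 + ⋯))` tend to `L`. -/
def IsCFLimit (b₀ : ℝ) (a b : ℕ → ℝ) (L : ℝ) : Prop :=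
  Filter.Tendsto (fun n => cfNum b₀ a b n / cfDen a b n) Filter.atTop (nhds L)

/-!
Write `y(x)` for the continued fraction with `s = x` and `R(x)` for the Gamma quotient.
The convergents of `y(x)` are the partial sums of an alternating series whose terms
`a₁⋯aₙ₊₁ / (Qₙ Qₙ₊₁)` decrease; since `aₙ ≍ n²`, their reciprocals grow at least like a harmonic
series, so the series converges and `x ≤ y(x) ≤ x + (2r - 1)/(2x)`.

The convergents at `x` and at `x + 2r` satisfy
`Pₙ(x) Pₙ(x+2r) - (x+1)(x+2r-1) Qₙ(x) Qₙ(x+2r) = (-1)ⁿ⁺¹ a₁⋯aₙ₊₁`, and the alternating sign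
forces `y(x) y(x+2r) = (x+1)(x+2r-1)`. By `Γ(u+1) = u Γ(u)`, `R` satisfies the same functional
equation, and log-convexity of `Γ` gives `R(x) ≤ x + r`. An upper bound `x + O(1)` together with
the functional equation gives `f(x)/x → 1` for both `f = y` and `f = R`. Then `y/R` is
`4r`-periodic and tends to `1`, so `y = R`.
-/

open Finset

theorem Monotone.tendsto_atTop_of_harmonic_two_step {f : ℕ → ℝ} (hf : Monotone f) {c : ℝ}
    (hc : 0 < c) (h : ∀ m : ℕ, f (2 * m) + c / (m + 1) ≤ f (2 * (m + 1))) :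
    Tendsto f atTop atTop := by
  have hsum (m : ℕ) : f 0 + c * ∑ k ∈ range m, (1 / (k + 1) : ℝ) ≤ f (2 * m) := by
    induction m with
    | zero => simp
    | succ m ih => rw [sum_range_succ, mul_add, mul_one_div]; linarith [h m]
  have heven : Tendsto (fun m => f (2 * m)) atTop atTop :=
    tendsto_atTop_mono hsum <| tendsto_atTop_add_const_left _ _ <|
      Real.tendsto_sum_range_one_div_nat_succ_atTop.const_mul_atTop hc
  refine tendsto_atTop_atTop_of_monotone hf fun y => ?_
  obtain ⟨m, hm⟩ := (tendsto_atTop.mp heven y).exists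
  exact ⟨2 * m, hm⟩

theorem eq_zero_of_tendsto_of_neg_one_pow_mul_nonneg {u : ℕ → ℝ} {L : ℝ}
    (hu : Tendsto u atTop (nhds L)) (h : ∀ n, 0 ≤ (-1) ^ n * u n) : L = 0 := by
  have heven : Tendsto (fun n => u (2 * n)) atTop (nhds L) :=
    hu.comp (tendsto_atTop_mono (fun n => by dsimp; omega) tendsto_id)
  have hodd : Tendsto (fun n => u (2 * n + 1)) atTop (nhds L) :=
    hu.comp (tendsto_atTop_mono (fun n => by dsimp; omega) tendsto_id)
  refine le_antisymm (le_of_tendsto' hodd fun n => ?_) (ge_of_tendsto' heven fun n => ?_)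
  · have := h (2 * n + 1)
    rw [pow_succ, pow_mul, neg_one_sq, one_pow] at this
    linarith
  · simpa [pow_mul] using h (2 * n)

theorem tendsto_div_self_of_mul_add_eq {f : ℝ → ℝ} {c α β γ : ℝ}
    (hpos : ∀ᶠ x in atTop, 0 < f x) (hfe : ∀ᶠ x in atTop, f x * f (x + c) = (x + α) * (x + β))
    (hle : ∀ᶠ x in atTop, f x ≤ x + γ) :
    Tendsto (fun x => f x / x) atTop (nhds 1) := by
  have hshift : Tendsto (fun x => x + c) atTop atTop := tendsto_atTop_add_const_right _ c tendsto_id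
  have hone (δ : ℝ) : Tendsto (fun x : ℝ => 1 + δ / x) atTop (nhds 1) := by
    simpa using (tendsto_const_nhds (x := (1 : ℝ))).add
      ((tendsto_const_nhds (x := δ)).div_atTop tendsto_id)
  have hlow : Tendsto (fun x : ℝ => (1 + α / x) * (1 + β / x) / (1 + (c + γ) / x)) atTop
      (nhds 1) := by
    have := ((hone α).mul (hone β)).div (hone (c + γ)) one_ne_zero
    rwa [mul_one, div_one] at this
  refine tendsto_of_tendsto_of_tendsto_of_le_of_le' hlow (hone γ) ?_ ?_
  · filter_upwards [hpos, hfe, hshift.eventually hpos, hshift.eventually hle,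
      eventually_gt_atTop 0] with x hfx he hpos' hle' hx
    -- the functional equation turns the upper bound at `x + c` into a lower bound at `x`
    have hxc : 0 < x + c + γ := hpos'.trans_le hle'
    have hfx_ge : (x + α) * (x + β) / (x + c + γ) ≤ f x := by
      rw [div_le_iff₀ hxc, ← he]
      exact mul_le_mul_of_nonneg_left hle' hfx.le
    calc (1 + α / x) * (1 + β / x) / (1 + (c + γ) / x)
        = (x + α) * (x + β) / (x + c + γ) / x := by
          rw [one_add_div hx.ne', one_add_div hx.ne', one_add_div hx.ne', ← add_assoc]
          field_simp
      _ ≤ f x / x := by gcongr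
  · filter_upwards [hle, eventually_gt_atTop 0] with x h hx
    calc f x / x ≤ (x + γ) / x := by gcongr
      _ = 1 + γ / x := by rw [one_add_div hx.ne']

theorem eq_of_mul_add_eq_of_tendsto_div_self {f g : ℝ → ℝ} {c x : ℝ} (hc : 0 < c)
    (hf : ∀ y, 0 < y → f y ≠ 0) (hg : ∀ y, 0 < y → g y ≠ 0)
    (hfg : ∀ y, 0 < y → f y * f (y + c) = g y * g (y + c))
    (hf1 : Tendsto (fun y => f y / y) atTop (nhds 1))
    (hg1 : Tendsto (fun y => g y / y) atTop (nhds 1)) (hx : 0 < x) : f x = g x := by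
  have hper (y : ℝ) (hy : 0 < y) : f y / g y = f (y + 2 * c) / g (y + 2 * c) := by
    have hy' : 0 < y + c := by linarith
    have h2 := hfg (y + c) hy'
    rw [add_assoc, ← two_mul] at h2
    rw [div_eq_div_iff (hg y hy) (hg _ (by linarith))]
    refine mul_right_cancel₀ (mul_ne_zero (hf _ hy') (hg _ hy')) ?_
    linear_combination (g (y + c) * g (y + 2 * c)) * hfg y hy - (g y * g (y + c)) * h2
  have hxN (N : ℕ) : 0 < x + 2 * c * N := by positivity
  have hN (N : ℕ) : f x / g x = f (x + 2 * c * N) / g (x + 2 * c * N) := by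
    induction N with
    | zero => simp
    | succ N ih =>
      rw [ih, hper _ (hxN N)]
      push_cast
      ring_nf
  have hto : Tendsto (fun N : ℕ => x + 2 * c * N) atTop atTop :=
    tendsto_atTop_add_const_left _ x
      (tendsto_natCast_atTop_atTop.const_mul_atTop (by positivity))
  have hlim : Tendsto (fun N : ℕ => f (x + 2 * c * N) / g (x + 2 * c * N)) atTop (nhds 1) := by
    have := ((hf1.div hg1 one_ne_zero).comp hto)
    rw [div_one] at this
    refine this.congr fun N => ?_
    exact div_div_div_cancel_right₀ (hxN N).ne' _ _
  have h1 : f x / g x = 1 :=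
    tendsto_nhds_unique (tendsto_const_nhds.congr hN) hlim
  exact (div_eq_one_iff_eq (hg x hx)).mp h1

section ContinuedFraction

variable {b₀ : ℝ} {a b : ℕ → ℝ}

theorem cfNum_add_two (n : ℕ) :
    cfNum b₀ a b (n + 2) = b (n + 2) * cfNum b₀ a b (n + 1) + a (n + 2) * cfNum b₀ a b n := rfl

theorem cfDen_add_two (n : ℕ) :
    cfDen a b (n + 2) = b (n + 2) * cfDen a b (n + 1) + a (n + 2) * cfDen a b n := rfl

theorem cfNum_succ_mul_cfDen_sub (n : ℕ) :
    cfNum b₀ a b (n + 1) * cfDen a b n - cfNum b₀ a b n * cfDen a b (n + 1) =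
      (-1) ^ n * ∏ k ∈ range (n + 1), a (k + 1) := by
  induction n with
  | zero => simp [cfNum, cfDen]; ring
  | succ n ih =>
    rw [cfNum_add_two, cfDen_add_two, prod_range_succ, pow_succ]
    linear_combination (-a (n + 2)) * ih

theorem cfDen_pos (ha : ∀ n, 0 ≤ a (n + 1)) (hb : ∀ n, 0 < b (n + 1)) (n : ℕ) :
    0 < cfDen a b n := by
  induction n using Nat.twoStepInduction with
  | zero => exact one_pos
  | one => exact hb 0
  | more n ih ih' =>
    rw [cfDen_add_two]
    have := ha (n + 1); have := hb (n + 1)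
    positivity

/-- The distance between the `n`-th and `(n+1)`-st convergents. -/
noncomputable def cfStep (a b : ℕ → ℝ) (n : ℕ) : ℝ :=
  (∏ k ∈ range (n + 1), a (k + 1)) / (cfDen a b n * cfDen a b (n + 1))

theorem cfNum_div_cfDen_succ_sub (hQ : ∀ n, cfDen a b n ≠ 0) (n : ℕ) :
    cfNum b₀ a b (n + 1) / cfDen a b (n + 1) - cfNum b₀ a b n / cfDen a b n =
      (-1) ^ n * cfStep a b n := by
  rw [cfStep, div_sub_div _ _ (hQ _) (hQ _), mul_comm (cfDen a b (n + 1)),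
    cfNum_succ_mul_cfDen_sub, mul_div_assoc, mul_comm (cfDen a b (n + 1))]

theorem cfNum_div_cfDen_eq_add_sum (hQ : ∀ n, cfDen a b n ≠ 0) (n : ℕ) :
    cfNum b₀ a b n / cfDen a b n = b₀ + ∑ i ∈ range n, (-1) ^ i * cfStep a b i := by
  induction n with
  | zero => simp [cfNum, cfDen]
  | succ n ih => rw [sum_range_succ, ← add_assoc, ← ih, ← cfNum_div_cfDen_succ_sub hQ]; ring

theorem cfStep_antitone (ha : ∀ n, 0 < a (n + 1)) (hb : ∀ n, 0 < b (n + 1)) :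
    Antitone (cfStep a b) := by
  have hQ := cfDen_pos (fun n => (ha n).le) hb
  refine antitone_nat_of_succ_le fun n => ?_
  have hQ2 : a (n + 2) * cfDen a b n ≤ cfDen a b (n + 2) := by
    rw [cfDen_add_two]; have := hb (n + 1); have := hQ (n + 1); nlinarith
  have hP : 0 < ∏ k ∈ range (n + 1), a (k + 1) := prod_pos fun k _ => ha k
  have := hQ n; have := hQ (n + 1); have := hQ (n + 2)
  rw [cfStep, cfStep, prod_range_succ, div_le_div_iff₀ (by positivity) (by positivity)]
  calc (∏ k ∈ range (n + 1), a (k + 1)) * a (n + 1 + 1) * (cfDen a b n * cfDen a b (n + 1))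
      = (∏ k ∈ range (n + 1), a (k + 1)) * cfDen a b (n + 1) * (a (n + 2) * cfDen a b n) := by
        ring
    _ ≤ (∏ k ∈ range (n + 1), a (k + 1)) * cfDen a b (n + 1) * cfDen a b (n + 2) := by gcongr
    _ = _ := by ring

theorem exists_isCFLimit_of_tendsto_cfStep (ha : ∀ n, 0 < a (n + 1)) (hb : ∀ n, 0 < b (n + 1))
    (h0 : Tendsto (cfStep a b) atTop (nhds 0)) :
    ∃ L, IsCFLimit b₀ a b L ∧ b₀ ≤ L ∧ L ≤ b₀ + a 1 / b 1 := by
  have hQ n := (cfDen_pos (fun n => (ha n).le) hb n).ne'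
  have hanti := cfStep_antitone ha hb
  obtain ⟨l, hl⟩ := hanti.tendsto_alternating_series_of_tendsto_zero h0
  refine ⟨b₀ + l, ?_, ?_, ?_⟩
  · simpa only [IsCFLimit, cfNum_div_cfDen_eq_add_sum hQ] using tendsto_const_nhds.add hl
  · simpa using hanti.alternating_series_le_tendsto hl 0
  · have := hanti.tendsto_le_alternating_series hl 0
    simp only [mul_zero, zero_add, sum_range_one, pow_zero, one_mul, cfStep] at this
    simp only [cfDen, prod_range_one, one_mul] at this
    linarith

theorem cfDen_le_or_le_of_sq_le {c : ℝ} {n : ℕ} (hc : 0 ≤ c) (hca : c ^ 2 ≤ a (n + 2))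
    (hb : 0 ≤ b (n + 2)) (hQ : 0 < cfDen a b n) (hQ' : 0 ≤ cfDen a b (n + 1)) :
    c * cfDen a b n ≤ cfDen a b (n + 1) ∨ c * cfDen a b (n + 1) ≤ cfDen a b (n + 2) := by
  refine (le_or_gt _ _).imp id fun hlt => ?_
  rw [cfDen_add_two]
  calc c * cfDen a b (n + 1) ≤ c * (c * cfDen a b n) := by gcongr
    _ = c ^ 2 * cfDen a b n := by ring
    _ ≤ a (n + 2) * cfDen a b n := by gcongr
    _ ≤ _ := le_add_of_nonneg_left (mul_nonneg hb hQ')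

theorem inv_cfStep_eq (n : ℕ) :
    (cfStep a b n)⁻¹ = cfDen a b n * cfDen a b (n + 1) / ∏ k ∈ range (n + 1), a (k + 1) :=
  inv_div _ _

theorem inv_cfStep_succ (n : ℕ) (ha : a (n + 2) ≠ 0) :
    (cfStep a b (n + 1))⁻¹ =
      (cfStep a b n)⁻¹ + b (n + 2) * cfDen a b (n + 1) ^ 2 / ∏ k ∈ range (n + 2), a (k + 1) := by
  rw [inv_cfStep_eq, inv_cfStep_eq, cfDen_add_two, prod_range_succ (n := n + 1)]
  field_simp
  ring

theorem inv_cfStep_add_le_of_mul_le {β c : ℝ} {m : ℕ} (ha : ∀ n, 0 < a (n + 1))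
    (hQ : ∀ n, 0 < cfDen a b n) (hβ : 0 ≤ β) (hβb : β ≤ b (m + 2)) (hc : 0 ≤ c)
    (hcQ : c * cfDen a b m ≤ cfDen a b (m + 1)) :
    (cfStep a b m)⁻¹ + β * c * (cfStep a b m)⁻¹ / a (m + 2) ≤ (cfStep a b (m + 1))⁻¹ := by
  rw [inv_cfStep_succ m (ha (m + 1)).ne']
  have := ha (m + 1); have := hQ m; have := hQ (m + 1)
  have : 0 ≤ b (m + 2) := hβ.trans hβb
  suffices h : β * c * (cfStep a b m)⁻¹ / a (m + 2) ≤
      b (m + 2) * cfDen a b (m + 1) ^ 2 / ∏ k ∈ range (m + 2), a (k + 1) by linarith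
  calc β * c * (cfStep a b m)⁻¹ / a (m + 2)
      = β * (c * cfDen a b m) * cfDen a b (m + 1) / ∏ k ∈ range (m + 2), a (k + 1) := by
        rw [inv_cfStep_eq, prod_range_succ (n := m + 1)]
        field_simp
    _ ≤ b (m + 2) * cfDen a b (m + 1) * cfDen a b (m + 1) / ∏ k ∈ range (m + 2), a (k + 1) := by
        have : 0 < ∏ k ∈ range (m + 2), a (k + 1) := prod_pos fun k _ => ha k
        gcongr
    _ = _ := by ring

theorem inv_cfStep_pos (ha : ∀ n, 0 < a (n + 1)) (hb : ∀ n, 0 < b (n + 1)) (n : ℕ) :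
    0 < (cfStep a b n)⁻¹ := by
  have hQ := cfDen_pos (fun n => (ha n).le) hb
  have := hQ n; have := hQ (n + 1)
  have : 0 < ∏ k ∈ range (n + 1), a (k + 1) := prod_pos fun k _ => ha k
  rw [inv_cfStep_eq]; positivity

theorem inv_cfStep_monotone (ha : ∀ n, 0 < a (n + 1)) (hb : ∀ n, 0 < b (n + 1)) :
    Monotone fun n => (cfStep a b n)⁻¹ := fun _ n hmn =>
  inv_anti₀ (inv_pos.mp (inv_cfStep_pos ha hb n)) (cfStep_antitone ha hb hmn)

theorem inv_cfStep_add_le_two_step {β κ K : ℝ} (ha : ∀ n, 0 < a (n + 1)) (hβ : 0 < β)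
    (hb : ∀ n, β ≤ b (n + 1)) (hκ : 0 ≤ κ) (hup : ∀ n : ℕ, a (n + 1) ≤ (K * (n + 1)) ^ 2)
    {n : ℕ} (hlow : (κ * (n + 1)) ^ 2 ≤ a (n + 2)) :
    (cfStep a b n)⁻¹ + β * (κ * (n + 1)) * (cfStep a b 0)⁻¹ / (K * (n + 3)) ^ 2 ≤
      (cfStep a b (n + 2))⁻¹ := by
  have hb' n : 0 < b (n + 1) := hβ.trans_le (hb n)
  have hQ := cfDen_pos (fun n => (ha n).le) hb'
  have hT_mono := inv_cfStep_monotone ha hb'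
  have hstep (m : ℕ) (hnm : n ≤ m) (hmn : m ≤ n + 1)
      (hcQ : κ * (n + 1) * cfDen a b m ≤ cfDen a b (m + 1)) :
      (cfStep a b n)⁻¹ + β * (κ * (n + 1)) * (cfStep a b 0)⁻¹ / (K * (n + 3)) ^ 2 ≤
        (cfStep a b (n + 2))⁻¹ := by
    have hbig := inv_cfStep_add_le_of_mul_le ha hQ hβ.le (hb (m + 1)) (by positivity) hcQ
    have ham : a (m + 2) ≤ (K * (n + 3)) ^ 2 := by
      have hm : (m : ℝ) + 2 ≤ n + 3 := by norm_cast; omega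
      calc a (m + 2) ≤ (K * ((m + 1 : ℕ) + 1)) ^ 2 := hup (m + 1)
        _ = K ^ 2 * ((m : ℝ) + 2) ^ 2 := by push_cast; ring
        _ ≤ K ^ 2 * ((n : ℝ) + 3) ^ 2 := by gcongr
        _ = _ := by ring
    have := ha (m + 1); have := inv_cfStep_pos ha hb' 0; have := inv_cfStep_pos ha hb' m
    have : β * (κ * (n + 1)) * (cfStep a b 0)⁻¹ / (K * (n + 3)) ^ 2 ≤
        β * (κ * (n + 1)) * (cfStep a b m)⁻¹ / a (m + 2) := by
      gcongr β * (κ * (n + 1)) * ?_ / ?_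
      exact hT_mono (Nat.zero_le m)
    linarith [hT_mono hnm, hT_mono (show m + 1 ≤ n + 2 by omega)]
  -- as `a (n+2) ≥ (κ (n+1))²`, one of the steps `m = n, n + 1` has `Q (m+1) ≥ κ (n+1) Q m`
  rcases cfDen_le_or_le_of_sq_le (by positivity) hlow (hb' (n + 1)).le (hQ n) (hQ (n + 1)).le
    with h | h
  · exact hstep n le_rfl (Nat.le_succ n) h
  · exact hstep (n + 1) (Nat.le_succ n) le_rfl h

theorem tendsto_cfStep_zero_of_sq_le {β κ K : ℝ} (ha : ∀ n, 0 < a (n + 1)) (hβ : 0 < β)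
    (hb : ∀ n, β ≤ b (n + 1)) (hκ : 0 < κ) (hlow : ∀ n : ℕ, (κ * (n + 1)) ^ 2 ≤ a (n + 2))
    (hup : ∀ n : ℕ, a (n + 1) ≤ (K * (n + 1)) ^ 2) :
    Tendsto (cfStep a b) atTop (nhds 0) := by
  have hb' n : 0 < b (n + 1) := hβ.trans_le (hb n)
  have hT0 := inv_cfStep_pos ha hb' 0
  have hK : 0 < K ^ 2 := (ha 0).trans_le (by simpa using hup 0)
  have hC : 0 < β * κ * (cfStep a b 0)⁻¹ / (9 * K ^ 2) := by positivity
  have hT_top : Tendsto (fun n => (cfStep a b n)⁻¹) atTop atTop := by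
    refine (inv_cfStep_monotone ha hb').tendsto_atTop_of_harmonic_two_step hC fun m => ?_
    have h := inv_cfStep_add_le_two_step ha hβ hb hκ.le hup (hlow (2 * m))
    rw [show ((2 * m : ℕ) : ℝ) = 2 * m by push_cast; ring,
      show 2 * m + 2 = 2 * (m + 1) by ring] at h
    refine le_trans ?_ h
    gcongr _ + ?_
    rw [div_div, div_le_div_iff₀ (by positivity) (by rw [mul_pow]; positivity)]
    have hsq : ((2 : ℝ) * m + 3) ^ 2 ≤ 9 * (2 * m + 1) * (m + 1) := by nlinarith
    have hpos : 0 ≤ β * κ * (cfStep a b 0)⁻¹ * K ^ 2 := by positivity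
    nlinarith [mul_le_mul_of_nonneg_left hsq hpos]
  exact hT_top.inv_tendsto_atTop.congr fun n => inv_inv (cfStep a b n)

end ContinuedFraction

noncomputable def gammaHalfRatio (u : ℝ) : ℝ := Real.Gamma (u + 1 / 2) / Real.Gamma u

theorem gammaHalfRatio_pos {u : ℝ} (hu : 0 < u) : 0 < gammaHalfRatio u :=
  div_pos (Real.Gamma_pos_of_pos (by linarith)) (Real.Gamma_pos_of_pos hu)

theorem gammaHalfRatio_mul_add_half {u : ℝ} (hu : 0 < u) :
    gammaHalfRatio u * gammaHalfRatio (u + 1 / 2) = u := by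
  have h1 := (Real.Gamma_pos_of_pos hu).ne'
  have h2 := (Real.Gamma_pos_of_pos (show 0 < u + 1 / 2 by linarith)).ne'
  rw [gammaHalfRatio, gammaHalfRatio, add_assoc, add_halves, Real.Gamma_add_one hu.ne']
  field_simp

theorem gammaHalfRatio_le_sqrt {u : ℝ} (hu : 0 < u) : gammaHalfRatio u ≤ √u := by
  have hG := Real.Gamma_pos_of_pos hu
  have h := Real.Gamma_mul_add_mul_le_rpow_Gamma_mul_rpow_Gamma hu (show 0 < u + 1 by linarith)
    one_half_pos one_half_pos (add_halves 1)
  rw [show 1 / 2 * u + 1 / 2 * (u + 1) = u + 1 / 2 by ring, Real.Gamma_add_one hu.ne',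
    Real.mul_rpow hu.le hG.le, ← mul_assoc, mul_comm (Real.Gamma u ^ _), mul_assoc,
    ← Real.rpow_add hG, add_halves, Real.rpow_one, ← Real.sqrt_eq_rpow] at h
  rw [gammaHalfRatio, div_le_iff₀ hG]
  linarith

section Brouncker

variable {r x : ℝ}

noncomputable def brounckerNum (r : ℝ) (n : ℕ) : ℝ := (2 * (n : ℝ) - 1) ^ 2 * r ^ 2 - (r - 1) ^ 2

theorem brounckerNum_one (r : ℝ) : brounckerNum r 1 = 2 * r - 1 := by
  simp only [brounckerNum]; ring

theorem brounckerNum_pos (hr : 1 / 2 < r) (n : ℕ) : 0 < brounckerNum r (n + 1) := by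
  have hn : (1 : ℝ) ≤ (2 * ((n + 1 : ℕ) : ℝ) - 1) ^ 2 := by
    push_cast; nlinarith [n.cast_nonneg (α := ℝ)]
  simp only [brounckerNum]
  nlinarith

theorem sq_le_brounckerNum (hr : 1 / 2 < r) (n : ℕ) :
    (2 * r * (n + 1)) ^ 2 ≤ brounckerNum r (n + 2) := by
  simp only [brounckerNum]; push_cast
  nlinarith [mul_nonneg (n.cast_nonneg (α := ℝ)) (sq_nonneg r)]

theorem brounckerNum_le_sq (r : ℝ) (n : ℕ) : brounckerNum r (n + 1) ≤ (2 * r * (n + 1)) ^ 2 := by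
  simp only [brounckerNum]; push_cast
  nlinarith [mul_nonneg (n.cast_nonneg (α := ℝ)) (sq_nonneg r), sq_nonneg (r - 1)]

noncomputable def brounckerCF (r x : ℝ) : ℝ :=
  limUnder atTop fun n => cfNum x (brounckerNum r) (fun _ => 2 * x) n /
    cfDen (brounckerNum r) (fun _ => 2 * x) n

theorem brounckerCF_spec (hr : 1 / 2 < r) (hx : 0 < x) :
    IsCFLimit x (brounckerNum r) (fun _ => 2 * x) (brounckerCF r x) ∧ x ≤ brounckerCF r x ∧
      brounckerCF r x ≤ x + (2 * r - 1) / (2 * x) := by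
  have h2x : (0 : ℝ) < 2 * x := by positivity
  have h0 := tendsto_cfStep_zero_of_sq_le (b := fun _ => 2 * x) (brounckerNum_pos hr) h2x
    (fun _ => le_rfl) (by linarith) (sq_le_brounckerNum hr) (brounckerNum_le_sq r)
  obtain ⟨L, hL, hbounds⟩ :=
    exists_isCFLimit_of_tendsto_cfStep (b₀ := x) (brounckerNum_pos hr) (fun _ => h2x) h0
  rw [brounckerNum_one] at hbounds
  rw [brounckerCF, Tendsto.limUnder_eq hL]
  exact ⟨hL, hbounds⟩

theorem brounckerCF_pos (hr : 1 / 2 < r) (hx : 0 < x) : 0 < brounckerCF r x :=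
  hx.trans_le (brounckerCF_spec hr hx).2.1

noncomputable def brounckerCross (r x : ℝ) (m n : ℕ) : ℝ :=
  cfNum x (brounckerNum r) (fun _ => 2 * x) m *
      cfNum (x + 2 * r) (brounckerNum r) (fun _ => 2 * (x + 2 * r)) n -
    (x + 1) * (x + 2 * r - 1) * (cfDen (brounckerNum r) (fun _ => 2 * x) m *
      cfDen (brounckerNum r) (fun _ => 2 * (x + 2 * r)) n)

theorem brounckerCross_add_two_left (m n : ℕ) :
    brounckerCross r x (m + 2) n =
      2 * x * brounckerCross r x (m + 1) n + brounckerNum r (m + 2) * brounckerCross r x m n := by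
  simp only [brounckerCross, cfNum_add_two, cfDen_add_two]; ring

theorem brounckerCross_add_two_right (m n : ℕ) :
    brounckerCross r x m (n + 2) = 2 * (x + 2 * r) * brounckerCross r x m (n + 1) +
      brounckerNum r (n + 2) * brounckerCross r x m n := by
  simp only [brounckerCross, cfNum_add_two, cfDen_add_two]; ring

theorem brounckerCross_self (r x : ℝ) (n : ℕ) :
    brounckerCross r x n n = (-1) ^ (n + 1) * ∏ k ∈ range (n + 1), brounckerNum r (k + 1) := by
  -- the diagonal closes up only together with the two neighbouring off-diagonal values
  have key (n : ℕ) :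
      brounckerCross r x n n = (-1) ^ (n + 1) * ∏ k ∈ range (n + 1), brounckerNum r (k + 1) ∧
      brounckerCross r x (n + 1) (n + 1) =
        (-1) ^ (n + 2) * ∏ k ∈ range (n + 2), brounckerNum r (k + 1) ∧
      brounckerCross r x (n + 1) n =
        (-1) ^ n * (2 * r * (n + 1) - x) * ∏ k ∈ range (n + 1), brounckerNum r (k + 1) ∧
      brounckerCross r x n (n + 1) =
        (-1) ^ (n + 1) * (x + 2 * r * (n + 2)) * ∏ k ∈ range (n + 1), brounckerNum r (k + 1) := by
    induction n with
    | zero =>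
      simp only [brounckerCross, cfNum, cfDen, prod_range_succ, prod_range_zero, brounckerNum]
      norm_num
      refine ⟨?_, ?_, ?_, ?_⟩ <;> ring
    | succ n ih =>
      obtain ⟨h1, h2, h3, h4⟩ := ih
      set P := ∏ k ∈ range (n + 1), brounckerNum r (k + 1)
      have hP2 : ∏ k ∈ range (n + 2), brounckerNum r (k + 1) = P * brounckerNum r (n + 2) :=
        prod_range_succ _ _
      have hP3 : ∏ k ∈ range (n + 3), brounckerNum r (k + 1) =
          P * brounckerNum r (n + 2) * brounckerNum r (n + 3) := by
        rw [prod_range_succ, hP2]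
      have hA : brounckerNum r (n + 3) = brounckerNum r (n + 2) + 8 * r ^ 2 * (n + 2) := by
        simp only [brounckerNum]; push_cast; ring
      rw [hP2] at h2
      refine ⟨by rwa [hP2], ?_, ?_, ?_⟩
      · rw [show n + 1 + 1 = n + 2 from rfl, show n + 1 + 2 = n + 3 from rfl,
          brounckerCross_add_two_left, brounckerCross_add_two_right,
          brounckerCross_add_two_right, h1, h2, h3, h4, hP3]
        linear_combination (-1) ^ n * P * brounckerNum r (n + 2) * hA
      · rw [show n + 1 + 1 = n + 2 from rfl, brounckerCross_add_two_left, h2, h4, hP2]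
        push_cast; ring
      · rw [show n + 1 + 1 = n + 2 from rfl, brounckerCross_add_two_right, h2, h3, hP2]
        push_cast; ring
  exact (key n).1

theorem brounckerCF_mul_add (hr : 1 / 2 < r) (hx : 0 < x) :
    brounckerCF r x * brounckerCF r (x + 2 * r) = (x + 1) * (x + 2 * r - 1) := by
  have hx' : 0 < x + 2 * r := by linarith
  have hQ := cfDen_pos (b := fun _ => 2 * x) (fun n => (brounckerNum_pos hr n).le)
    (fun _ => by positivity)
  have hQ' := cfDen_pos (b := fun _ => 2 * (x + 2 * r)) (fun n => (brounckerNum_pos hr n).le)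
    (fun _ => by positivity)
  have hlim := ((brounckerCF_spec hr hx).1.mul (brounckerCF_spec hr hx').1).const_sub
    ((x + 1) * (x + 2 * r - 1))
  refine (sub_eq_zero.mp (eq_zero_of_tendsto_of_neg_one_pow_mul_nonneg hlim fun n => ?_)).symm
  have hP : 0 < ∏ k ∈ range (n + 1), brounckerNum r (k + 1) :=
    prod_pos fun k _ => brounckerNum_pos hr k
  have hsign : (-1) ^ n * ((x + 1) * (x + 2 * r - 1) -
      cfNum x (brounckerNum r) (fun _ => 2 * x) n / cfDen (brounckerNum r) (fun _ => 2 * x) n *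
      (cfNum (x + 2 * r) (brounckerNum r) (fun _ => 2 * (x + 2 * r)) n /
        cfDen (brounckerNum r) (fun _ => 2 * (x + 2 * r)) n)) =
      (∏ k ∈ range (n + 1), brounckerNum r (k + 1)) /
        (cfDen (brounckerNum r) (fun _ => 2 * x) n *
          cfDen (brounckerNum r) (fun _ => 2 * (x + 2 * r)) n) := by
    have hE := brounckerCross_self r x n
    have hQn := (hQ n).ne'; have hQn' := (hQ' n).ne'
    simp only [brounckerCross] at hE
    generalize cfDen (brounckerNum r) (fun _ => 2 * x) n = q at hE hQn ⊢
    generalize cfDen (brounckerNum r) (fun _ => 2 * (x + 2 * r)) n = q' at hE hQn' ⊢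
    generalize cfNum x (brounckerNum r) (fun _ => 2 * x) n = p at hE ⊢
    generalize cfNum (x + 2 * r) (brounckerNum r) (fun _ => 2 * (x + 2 * r)) n = p' at hE ⊢
    have hsq : ((-1 : ℝ) ^ n) ^ 2 = 1 := by rw [← pow_mul, pow_mul', neg_one_sq, one_pow]
    rw [div_mul_div_comm, eq_div_iff (mul_ne_zero hQn hQn')]
    field_simp
    linear_combination (∏ k ∈ range (n + 1), brounckerNum r (k + 1)) * hsq - (-1) ^ n * hE
  have := hQ n; have := hQ' n
  exact hsign ▸ by positivity

noncomputable def brounckerGamma (r x : ℝ) : ℝ :=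
  4 * r * (Real.Gamma ((x + 2*r + 1) / (4*r)) * Real.Gamma ((x + 4*r - 1) / (4*r))) /
    (Real.Gamma ((x + 1) / (4*r)) * Real.Gamma ((x + 2*r - 1) / (4*r)))

theorem brounckerGamma_eq (hr : 0 < r) (x : ℝ) :
    brounckerGamma r x =
      4 * r * gammaHalfRatio ((x + 1) / (4 * r)) * gammaHalfRatio ((x + 2 * r - 1) / (4 * r)) := by
  have h1 : (x + 2*r + 1) / (4*r) = (x + 1) / (4 * r) + 1 / 2 := by field_simp; ring
  have h2 : (x + 4*r - 1) / (4*r) = (x + 2 * r - 1) / (4 * r) + 1 / 2 := by field_simp; ring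
  rw [brounckerGamma, h1, h2, mul_div_assoc, mul_div_mul_comm, gammaHalfRatio, gammaHalfRatio,
    ← mul_assoc]

theorem brounckerGamma_pos (hr : 1 / 2 < r) (hx : 0 < x) : 0 < brounckerGamma r x := by
  have hu := gammaHalfRatio_pos (u := (x + 1) / (4 * r)) (by positivity)
  have hv := gammaHalfRatio_pos (u := (x + 2 * r - 1) / (4 * r))
    (div_pos (by linarith) (by positivity))
  rw [brounckerGamma_eq (by linarith)]
  positivity

theorem brounckerGamma_mul_add (hr : 1 / 2 < r) (hx : 0 < x) :
    brounckerGamma r x * brounckerGamma r (x + 2 * r) = (x + 1) * (x + 2 * r - 1) := by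
  have hr0 : 0 < r := by linarith
  have hu := gammaHalfRatio_mul_add_half (u := (x + 1) / (4 * r)) (by positivity)
  have hv := gammaHalfRatio_mul_add_half (u := (x + 2 * r - 1) / (4 * r))
    (div_pos (by linarith) (by positivity))
  have h1 : (x + 2 * r + 1) / (4 * r) = (x + 1) / (4 * r) + 1 / 2 := by field_simp; ring
  have h2 : (x + 2 * r + 2 * r - 1) / (4 * r) = (x + 2 * r - 1) / (4 * r) + 1 / 2 := by
    field_simp; ring
  rw [brounckerGamma_eq hr0, brounckerGamma_eq hr0, h1, h2]
  calc _ = 16 * r ^ 2 * (gammaHalfRatio ((x + 1) / (4 * r)) *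
        gammaHalfRatio ((x + 1) / (4 * r) + 1 / 2)) *
        (gammaHalfRatio ((x + 2 * r - 1) / (4 * r)) *
          gammaHalfRatio ((x + 2 * r - 1) / (4 * r) + 1 / 2)) := by ring
    _ = _ := by rw [hu, hv]; field_simp; ring

theorem brounckerGamma_le (hr : 1 / 2 < r) (hx : 0 < x) : brounckerGamma r x ≤ x + r := by
  have hr0 : 0 < r := by linarith
  have hu0 : 0 < (x + 1) / (4 * r) := by positivity
  have hv0 : 0 < (x + 2 * r - 1) / (4 * r) := div_pos (by linarith) (by positivity)
  have hu := gammaHalfRatio_le_sqrt hu0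
  have hv := gammaHalfRatio_le_sqrt hv0
  have hv_nonneg := (gammaHalfRatio_pos hv0).le
  have hamgm : √((x + 1) / (4 * r)) * √((x + 2 * r - 1) / (4 * r)) ≤
      ((x + 1) / (4 * r) + (x + 2 * r - 1) / (4 * r)) / 2 := by
    nlinarith [sq_nonneg (√((x + 1) / (4 * r)) - √((x + 2 * r - 1) / (4 * r))),
      Real.sq_sqrt hu0.le, Real.sq_sqrt hv0.le]
  calc brounckerGamma r x
      ≤ 4 * r * √((x + 1) / (4 * r)) * √((x + 2 * r - 1) / (4 * r)) := by
        rw [brounckerGamma_eq hr0]; gcongr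
    _ ≤ 4 * r * (((x + 1) / (4 * r) + (x + 2 * r - 1) / (4 * r)) / 2) := by
        rw [mul_assoc]; gcongr
    _ = x + r := by field_simp; ring

theorem brounckerCF_eq_brounckerGamma (hr : 1 / 2 < r) (hx : 0 < x) :
    brounckerCF r x = brounckerGamma r x := by
  refine eq_of_mul_add_eq_of_tendsto_div_self (c := 2 * r) (by linarith)
    (fun y hy => (brounckerCF_pos hr hy).ne') (fun y hy => (brounckerGamma_pos hr hy).ne')
    (fun y hy => by rw [brounckerCF_mul_add hr hy, brounckerGamma_mul_add hr hy]) ?_ ?_ hx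
  · refine tendsto_div_self_of_mul_add_eq (γ := (2 * r - 1) / 2)
      ((eventually_gt_atTop 0).mono fun y => brounckerCF_pos hr)
      ((eventually_gt_atTop 0).mono fun y hy => by rw [brounckerCF_mul_add hr hy, add_sub_assoc])
      ((eventually_ge_atTop 1).mono fun y hy => ?_)
    have hy0 : 0 < y := by linarith
    calc brounckerCF r y ≤ y + (2 * r - 1) / (2 * y) := (brounckerCF_spec hr hy0).2.2
      _ ≤ y + (2 * r - 1) / 2 := by
        have : 0 ≤ 2 * r - 1 := by linarith
        gcongr
        linarith
  · exact tendsto_div_self_of_mul_add_eq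
      ((eventually_gt_atTop 0).mono fun y => brounckerGamma_pos hr)
      ((eventually_gt_atTop 0).mono fun y hy => by
        rw [brounckerGamma_mul_add hr hy, add_sub_assoc])
      ((eventually_gt_atTop 0).mono fun y => brounckerGamma_le hr)

end Brouncker

theorem ramanujan_generalized_brouncker (s r : ℝ) (hs : 0 < s) (hr : 1 / 2 < r) :
    IsCFLimit s (fun n => (2 * (n : ℝ) - 1) ^ 2 * r ^ 2 - (r - 1) ^ 2) (fun _ => 2 * s)
      (4 * r * (Real.Gamma ((s + 2*r + 1) / (4*r)) * Real.Gamma ((s + 4*r - 1) / (4*r))) /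
        (Real.Gamma ((s + 1) / (4*r)) * Real.Gamma ((s + 2*r - 1) / (4*r)))) := by
  have h := (brounckerCF_spec hr hs).1
  rwa [brounckerCF_eq_brounckerGamma hr hs] at h
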